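/- arXiv:1202.3808 — 4 statements merged into one kernel-verified Lean document; each statement's English description precedes it below -/
import Mathlib

section
/- For positive integers a, b (not both reducible to the excluded trivial case), a⁴ - 6a²b² + b⁴ is never a perfect square when it is positive. -/
/-!
Since `(a² - b²)⁴ - (2ab)⁴ = (a⁴ - 6a²b² + b⁴)(a² + b²)²`, a square value would give a solution of
`x⁴ - y⁴ = z²` with `yz ≠ 0`. Fermat's descent excludes these: after dividing by `gcd(x, y)`,
parametrising the primitive Pythagorean triple `(y², z, x²)` gives a solution with smaller `|x|`,
directly as `m⁴ - n⁴ = (xy)²` when `y` is odd, and when `y` is even after a second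
parametrisation of the triple formed by the two parameters, which are a square and twice a square.
-/

lemma Int.sq_of_isCoprime_of_nonneg {a b c : ℤ} (h : IsCoprime a b) (ha : 0 ≤ a)
    (heq : a * b = c ^ 2) : ∃ d, a = d ^ 2 := by
  obtain ⟨d, rfl | rfl⟩ := Int.sq_of_isCoprime h heq
  · exact ⟨d, rfl⟩
  · exact ⟨0, by nlinarith [sq_nonneg d]⟩

-- The right triangle with legs `x⁴ - y⁴` and `2x²y²` then has the square area `(xyz)²`.
def FermatRightTriangle (x y z : ℤ) : Prop :=
  y ≠ 0 ∧ z ≠ 0 ∧ y ^ 4 + z ^ 2 = x ^ 4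

namespace FermatRightTriangle

variable {x y z : ℤ}

lemma ne_zero (h : FermatRightTriangle x y z) : x ≠ 0 := by
  obtain ⟨hy, -, heq⟩ := h
  rintro rfl
  have : 0 < y ^ 4 := by positivity
  nlinarith [sq_nonneg z]

lemma exists_isCoprime (h : FermatRightTriangle x y z) :
    ∃ x' y' z', FermatRightTriangle x' y' z' ∧ IsCoprime x' y' ∧ x' ^ 2 ≤ x ^ 2 := by
  obtain ⟨hy, hz, heq⟩ := h
  obtain ⟨g, x', y', hg, hgcd, rfl, rfl⟩ :=
    Int.exists_gcd_one' (Int.gcd_pos_of_ne_zero_right x hy)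
  have hg1 : (1 : ℤ) ≤ g := by exact_mod_cast hg
  obtain ⟨z', rfl⟩ : (g : ℤ) ^ 2 ∣ z := by
    rw [← Int.pow_dvd_pow_iff two_ne_zero]
    exact ⟨x' ^ 4 - y' ^ 4, by linear_combination heq⟩
  refine ⟨x', y', z', ⟨?_, ?_, ?_⟩, Int.isCoprime_iff_gcd_eq_one.mpr hgcd, ?_⟩
  · rintro rfl
    simp at hy
  · rintro rfl
    simp at hz
  · refine mul_left_cancel₀ (pow_ne_zero 4 (by positivity : (g : ℤ) ≠ 0)) ?_
    linear_combination heq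
  · rw [mul_pow]
    exact le_mul_of_one_le_right (sq_nonneg x') (one_le_pow₀ hg1)

lemma isCoprime_sq_left (h : FermatRightTriangle x y z) (hxy : IsCoprime x y) :
    IsCoprime (y ^ 2) z := by
  have : IsCoprime (y ^ 2) (x ^ 4 + y ^ 2 * -y ^ 2) := (hxy.symm.pow).add_mul_left_right _
  rw [show x ^ 4 + y ^ 2 * -y ^ 2 = z ^ 2 by linear_combination -h.2.2] at this
  exact (IsCoprime.pow_right_iff two_pos).mp this

lemma exists_lt_of_odd (h : FermatRightTriangle x y z) (hxy : IsCoprime x y) (hy : Odd y) :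
    ∃ x' y' z', FermatRightTriangle x' y' z' ∧ x' ^ 2 < x ^ 2 := by
  have htri : PythagoreanTriple (y ^ 2) z (x ^ 2) := by
    unfold PythagoreanTriple
    linear_combination h.2.2
  obtain ⟨m, n, hy2, hz, hx2, -⟩ := htri.coprime_classification'
    (Int.isCoprime_iff_gcd_eq_one.mp (h.isCoprime_sq_left hxy)) (Int.odd_iff.mp hy.pow)
    (by positivity [h.ne_zero])
  have hn : n ≠ 0 := by
    rintro rfl
    exact h.2.1 (by simpa using hz)
  refine ⟨m, n, x * y, ⟨hn, mul_ne_zero h.ne_zero h.1, ?_⟩, ?_⟩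
  · linear_combination x ^ 2 * hy2 + (m ^ 2 - n ^ 2) * hx2
  · have : 0 < n ^ 2 := by positivity
    linarith

lemma exists_lt_of_sq_add_sq {A B : ℤ} (hA : Odd A) (hB : 0 < B) (hAB : IsCoprime A B)
    (hy : A * (2 * B) = y ^ 2) (hx : A ^ 2 + B ^ 2 = x ^ 2) :
    ∃ x' y' z', FermatRightTriangle x' y' z' ∧ x' ^ 2 < x ^ 2 := by
  have hA0 : 0 ≤ A := by nlinarith [sq_nonneg y]
  have hcop : IsCoprime A (2 * B) := (Int.isCoprime_two_right.mpr hA).mul_right hAB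
  obtain ⟨s, hs⟩ := Int.sq_of_isCoprime_of_nonneg hcop hA0 hy
  obtain ⟨u, hu⟩ := Int.sq_of_isCoprime_of_nonneg hcop.symm (by positivity)
    (show 2 * B * A = y ^ 2 by linear_combination hy)
  have hx0 : 0 < |x| := abs_pos.mpr (by rintro rfl; nlinarith [sq_nonneg A])
  have htri : PythagoreanTriple A B |x| := by
    unfold PythagoreanTriple
    rw [abs_mul_abs_self]
    linear_combination hx
  obtain ⟨p, q, hAp, hBpq, hxpq, hpq, -, hp0⟩ :=
    htri.coprime_classification' (Int.isCoprime_iff_gcd_eq_one.mp hAB) (Int.odd_iff.mp hA) hx0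
  have hp : 0 < p := lt_of_le_of_ne hp0 (by rintro rfl; simp at hBpq; omega)
  have hq : 0 < q := by nlinarith
  obtain ⟨w, rfl⟩ : Even u := by
    rw [← Int.even_pow' two_ne_zero, ← hu]
    exact even_two_mul B
  have hpqw : p * q = w ^ 2 := by
    refine mul_left_cancel₀ (four_ne_zero (α := ℤ)) ?_
    linear_combination hu - 2 * hBpq
  have hPQ : IsCoprime p q := Int.isCoprime_iff_gcd_eq_one.mpr hpq
  obtain ⟨e, rfl⟩ := Int.sq_of_isCoprime_of_nonneg hPQ hp.le hpqw
  obtain ⟨f, rfl⟩ := Int.sq_of_isCoprime_of_nonneg hPQ.symm hq.le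
    (show q * e ^ 2 = w ^ 2 by linear_combination hpqw)
  refine ⟨e, f, s, ⟨?_, ?_, ?_⟩, ?_⟩
  · rintro rfl
    simp at hq
  · rintro rfl
    simp [hs] at hA
  · linear_combination hAp - hs
  · have : e ^ 2 ≤ (e ^ 2) ^ 2 := by nlinarith
    have : 0 < (f ^ 2) ^ 2 := by positivity
    have : |x| ≤ x ^ 2 := by nlinarith [sq_abs x]
    linarith

lemma exists_lt_of_even (h : FermatRightTriangle x y z) (hxy : IsCoprime x y) (hy : Even y) :
    ∃ x' y' z', FermatRightTriangle x' y' z' ∧ x' ^ 2 < x ^ 2 := by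
  have hz : Odd z := Int.isCoprime_two_left.mp <|
    (h.isCoprime_sq_left hxy).of_isCoprime_of_dvd_left (dvd_pow hy.two_dvd two_ne_zero)
  have htri : PythagoreanTriple z (y ^ 2) (x ^ 2) := by
    unfold PythagoreanTriple
    linear_combination h.2.2
  obtain ⟨m, n, -, hy2, hx2, hmn, hparity, hm0⟩ := htri.coprime_classification'
    (Int.isCoprime_iff_gcd_eq_one.mp (h.isCoprime_sq_left hxy).symm) (Int.odd_iff.mp hz)
    (by positivity [h.ne_zero])
  have hmn_pos : 0 < m * n := by
    have : 0 < y ^ 2 := by positivity [h.1]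
    linarith
  have hm : 0 < m := lt_of_le_of_ne hm0 (by rintro rfl; simp at hmn_pos)
  have hn : 0 < n := pos_of_mul_pos_right hmn_pos hm.le
  have hMN : IsCoprime m n := Int.isCoprime_iff_gcd_eq_one.mpr hmn
  rcases hparity with ⟨-, hn_odd⟩ | ⟨hm_odd, -⟩
  · exact exists_lt_of_sq_add_sq (y := y) (Int.odd_iff.mpr hn_odd) hm hMN.symm
      (by linear_combination -hy2) (by linear_combination -hx2)
  · exact exists_lt_of_sq_add_sq (y := y) (Int.odd_iff.mpr hm_odd) hn hMN
      (by linear_combination -hy2) (by linear_combination -hx2)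

lemma exists_lt (h : FermatRightTriangle x y z) :
    ∃ x' y' z', FermatRightTriangle x' y' z' ∧ x' ^ 2 < x ^ 2 := by
  obtain ⟨x₁, y₁, z₁, h₁, hcop, hle⟩ := h.exists_isCoprime
  obtain ⟨x₂, y₂, z₂, h₂, hlt⟩ :=
    (Int.even_or_odd y₁).elim (h₁.exists_lt_of_even hcop) (h₁.exists_lt_of_odd hcop)
  exact ⟨x₂, y₂, z₂, h₂, hlt.trans_le hle⟩

end FermatRightTriangle

theorem not_fermatRightTriangle (x y z : ℤ) : ¬ FermatRightTriangle x y z := fun h ↦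
  let ⟨x', y', z', h', hlt⟩ := h.exists_lt
  have : x'.natAbs < x.natAbs := Int.natAbs_lt_iff_sq_lt.mpr hlt
  not_fermatRightTriangle x' y' z' h'
termination_by x.natAbs

theorem stmt_15 (a b : ℤ) (ha : 0 < a) (hb : 0 < b)
    (hpos : 0 < a ^ 4 - 6 * a ^ 2 * b ^ 2 + b ^ 4) :
    ¬ IsSquare (a ^ 4 - 6 * a ^ 2 * b ^ 2 + b ^ 4) := by
  rintro ⟨c, hc⟩
  have hc0 : c ≠ 0 := by
    rintro rfl
    simp [hc] at hpos
  refine not_fermatRightTriangle (a ^ 2 - b ^ 2) (2 * a * b) (c * (a ^ 2 + b ^ 2))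
    ⟨by positivity, mul_ne_zero hc0 (by positivity), ?_⟩
  linear_combination (-(a ^ 2 + b ^ 2) ^ 2) * hc
end

section
/- There are no integers p, q such that p² + q² and p² - q² are both positive perfect squares. -/
/-! Fermat's descent on `x⁴ - y⁴ = z²` in positive integers: every solution yields one with
smaller `x`. A common prime factor of `x` and `y` can be divided out. For coprime `x`, `y` with
`y` odd, the primitive triple `(y², z, x²) = (m² - n², 2mn, m² + n²)` gives
`m⁴ - n⁴ = (xy)²`. For `y` even, the primitive triples `(z, y², x²)` and then `(m, n, x)` give
`y² = 4ab(a² - b²)` with `a`, `b`, `a² - b²` pairwise coprime, hence all squares `e²`, `f²`, `d²`,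
and `e⁴ - f⁴ = d²`. The theorem is the case `x⁴ - y⁴ = (p² + q²)(p² - q²)`. -/

theorem Int.exists_pos_sq_of_isCoprime {a b c : ℤ} (hab : IsCoprime a b) (ha : 0 < a)
    (h : a * b = c ^ 2) : ∃ d, 0 < d ∧ a = d ^ 2 := by
  obtain ⟨d, hd | hd⟩ := Int.sq_of_isCoprime hab h
  · have hd0 : d ≠ 0 := by rintro rfl; simp [hd] at ha
    exact ⟨|d|, abs_pos.mpr hd0, by rw [sq_abs, hd]⟩
  · exfalso; nlinarith [sq_nonneg d]

theorem IsCoprime.of_fourth_pow_sub_eq_sq {x y z : ℤ} (hxy : IsCoprime x y)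
    (h : x ^ 4 - y ^ 4 = z ^ 2) : IsCoprime y z := by
  have h4 : IsCoprime (y ^ 4) (x ^ 4 + y ^ 4 * (-1)) := hxy.pow.symm.add_mul_left_right (-1)
  rw [show x ^ 4 + y ^ 4 * (-1) = z ^ 2 by linear_combination h] at h4
  exact IsCoprime.pow_iff (by norm_num) (by norm_num) |>.mp h4

theorem PythagoreanTriple.exists_pos_of_coprime_of_odd {x y z : ℤ} (h : PythagoreanTriple x y z)
    (hc : Int.gcd x y = 1) (hx : x % 2 = 1) (hx0 : 0 < x) (hy0 : 0 < y) (hz0 : 0 < z) :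
    ∃ m n, 0 < n ∧ n < m ∧ Int.gcd m n = 1 ∧
      x = m ^ 2 - n ^ 2 ∧ y = 2 * m * n ∧ z = m ^ 2 + n ^ 2 := by
  obtain ⟨m, n, rfl, rfl, rfl, hmn, -, hm⟩ := h.coprime_classification' hc hx hz0
  have hn : 0 < n := by
    by_contra! hn
    nlinarith [mul_nonpos_of_nonneg_of_nonpos hm hn]
  exact ⟨m, n, hn, by nlinarith, hmn, rfl, rfl, rfl⟩

theorem PythagoreanTriple.exists_mul_eq_of_coprime {x y z : ℤ} (h : PythagoreanTriple x y z)
    (hc : Int.gcd x y = 1) (hx0 : 0 < x) (hy0 : 0 < y) (hz0 : 0 < z) :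
    ∃ a b, 0 < b ∧ b < a ∧ Int.gcd a b = 1 ∧
      z = a ^ 2 + b ^ 2 ∧ x * y = 2 * a * b * (a ^ 2 - b ^ 2) := by
  rcases h.even_odd_of_coprime hc with ⟨-, hy⟩ | ⟨hx, -⟩
  · obtain ⟨a, b, hb, hba, hab, rfl, rfl, rfl⟩ :=
      h.symm.exists_pos_of_coprime_of_odd (by rwa [Int.gcd_comm]) hy hy0 hx0 hz0
    exact ⟨a, b, hb, hba, hab, rfl, by ring⟩
  · obtain ⟨a, b, hb, hba, hab, rfl, rfl, rfl⟩ :=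
      h.exists_pos_of_coprime_of_odd hc hx hx0 hy0 hz0
    exact ⟨a, b, hb, hba, hab, rfl, by ring⟩

namespace FourthPowSubSq

theorem exists_fourth_pow_sub_eq_sq_of_mul_eq_sq {a b w : ℤ} (hab : IsCoprime a b) (hb : 0 < b)
    (hba : b < a) (h : a * b * (a ^ 2 - b ^ 2) = w ^ 2) :
    ∃ e f d, 0 < e ∧ 0 < f ∧ 0 < d ∧ a = e ^ 2 ∧ e ^ 4 - f ^ 4 = d ^ 2 := by
  have hsub : 0 < a ^ 2 - b ^ 2 := by nlinarith
  have hco : IsCoprime (a * b) (a ^ 2 - b ^ 2) := by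
    refine IsCoprime.mul_left ?_ ?_
    · simpa [sub_eq_neg_add, sq] using (hab.pow_right (n := 2)).neg_right.add_mul_left_right a
    · simpa [sub_eq_add_neg, sq] using (hab.symm.pow_right (n := 2)).add_mul_left_right (-b)
  obtain ⟨c, -, hc⟩ := Int.exists_pos_sq_of_isCoprime hco (by nlinarith) h
  obtain ⟨d, hd, hd'⟩ :=
    Int.exists_pos_sq_of_isCoprime hco.symm hsub (by rw [mul_comm]; exact h)
  obtain ⟨e, he, rfl⟩ := Int.exists_pos_sq_of_isCoprime hab (by linarith) hc
  obtain ⟨f, hf, rfl⟩ := Int.exists_pos_sq_of_isCoprime hab.symm hb (by rw [mul_comm]; exact hc)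
  exact ⟨e, f, d, he, hf, hd, rfl, by rw [← hd']; ring⟩

variable {x y z : ℤ}

theorem exists_smaller_of_odd (hx : 0 < x) (hy : 0 < y) (hz : 0 < z) (hxy : IsCoprime x y)
    (hyo : Odd y) (h : x ^ 4 - y ^ 4 = z ^ 2) :
    ∃ x' y' z', 0 < x' ∧ x' < x ∧ 0 < y' ∧ 0 < z' ∧ x' ^ 4 - y' ^ 4 = z' ^ 2 := by
  have ht : PythagoreanTriple (y ^ 2) z (x ^ 2) := by
    unfold PythagoreanTriple; linear_combination -h
  have hc : Int.gcd (y ^ 2) z = 1 :=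
    Int.isCoprime_iff_gcd_eq_one.mp (hxy.of_fourth_pow_sub_eq_sq h).pow_left
  obtain ⟨m, n, hn, hnm, -, hy2, -, hx2⟩ := ht.exists_pos_of_coprime_of_odd hc
    (Int.odd_iff.mp hyo.pow) (by positivity) hz (by positivity)
  refine ⟨m, n, x * y, by linarith, ?_, hn, by positivity, ?_⟩
  · exact lt_of_pow_lt_pow_left₀ 2 hx.le (by nlinarith)
  · linear_combination (-x ^ 2) * hy2 - (m ^ 2 - n ^ 2) * hx2

theorem exists_smaller_of_even (hx : 0 < x) (hy : 0 < y) (hz : 0 < z) (hxy : IsCoprime x y)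
    (hye : Even y) (h : x ^ 4 - y ^ 4 = z ^ 2) :
    ∃ x' y' z', 0 < x' ∧ x' < x ∧ 0 < y' ∧ 0 < z' ∧ x' ^ 4 - y' ^ 4 = z' ^ 2 := by
  have ht : PythagoreanTriple z (y ^ 2) (x ^ 2) := by
    unfold PythagoreanTriple; linear_combination -h
  have hc : Int.gcd z (y ^ 2) = 1 :=
    Int.isCoprime_iff_gcd_eq_one.mp (hxy.of_fourth_pow_sub_eq_sq h).symm.pow_right
  have hzo : z % 2 = 1 := by
    have := Int.even_iff.mp (Int.even_pow.mpr ⟨hye, two_ne_zero⟩)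
    have := ht.even_odd_of_coprime hc
    omega
  obtain ⟨m, n, hn, hnm, hmn, -, hy2, hx2⟩ :=
    ht.exists_pos_of_coprime_of_odd hc hzo hz (by positivity) (by positivity)
  have ht' : PythagoreanTriple m n x := by
    unfold PythagoreanTriple; linear_combination -hx2
  obtain ⟨a, b, hb, hba, hab, rfl, hmn'⟩ :=
    ht'.exists_mul_eq_of_coprime hmn (by linarith) hn hx
  obtain ⟨w, rfl⟩ := hye
  obtain ⟨e, f, d, he, hf, hd, rfl, hefd⟩ := exists_fourth_pow_sub_eq_sq_of_mul_eq_sq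
    (Int.isCoprime_iff_gcd_eq_one.mpr hab) hb hba (by linarith)
  exact ⟨e, f, d, he, by nlinarith, hf, hd, hefd⟩

theorem exists_smaller_of_not_isCoprime (hx : 0 < x) (hy : 0 < y) (hz : 0 < z)
    (hxy : ¬ IsCoprime x y) (h : x ^ 4 - y ^ 4 = z ^ 2) :
    ∃ x' y' z', 0 < x' ∧ x' < x ∧ 0 < y' ∧ 0 < z' ∧ x' ^ 4 - y' ^ 4 = z' ^ 2 := by
  rw [Int.isCoprime_iff_gcd_eq_one] at hxy
  obtain ⟨p, hp, hpx, hpy⟩ := Nat.Prime.not_coprime_iff_dvd.mp hxy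
  obtain ⟨x', rfl⟩ := Int.natCast_dvd.mpr hpx
  obtain ⟨y', rfl⟩ := Int.natCast_dvd.mpr hpy
  obtain ⟨z', rfl⟩ : (p : ℤ) ^ 2 ∣ z := by
    rw [← Int.pow_dvd_pow_iff two_ne_zero, ← h]
    exact ⟨x' ^ 4 - y' ^ 4, by ring⟩
  have hp1 : (1 : ℤ) < p := by exact_mod_cast hp.one_lt
  have hp0 : (0 : ℤ) < p := by linarith
  have hx' : 0 < x' := pos_of_mul_pos_right hx hp0.le
  refine ⟨x', y', z', hx', lt_mul_of_one_lt_left hx' hp1, pos_of_mul_pos_right hy hp0.le,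
    pos_of_mul_pos_right hz (by positivity), ?_⟩
  exact mul_left_cancel₀ (pow_ne_zero 4 hp0.ne') (by linear_combination h)

theorem exists_smaller (hx : 0 < x) (hy : 0 < y) (hz : 0 < z) (h : x ^ 4 - y ^ 4 = z ^ 2) :
    ∃ x' y' z', 0 < x' ∧ x' < x ∧ 0 < y' ∧ 0 < z' ∧ x' ^ 4 - y' ^ 4 = z' ^ 2 := by
  by_cases hxy : IsCoprime x y
  · rcases Int.even_or_odd y with hye | hyo
    · exact exists_smaller_of_even hx hy hz hxy hye h
    · exact exists_smaller_of_odd hx hy hz hxy hyo h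
  · exact exists_smaller_of_not_isCoprime hx hy hz hxy h

end FourthPowSubSq

theorem fourth_pow_sub_fourth_pow_ne_sq {x y z : ℤ} (hx : 0 < x) (hy : 0 < y) (hz : 0 < z) :
    x ^ 4 - y ^ 4 ≠ z ^ 2 := by
  intro h
  obtain ⟨x', y', z', hx', hlt, hy', hz', h'⟩ :=
    FourthPowSubSq.exists_smaller hx hy hz h
  exact fourth_pow_sub_fourth_pow_ne_sq hx' hy' hz' h'
termination_by x.toNat
decreasing_by omega

theorem stmt_17 (p q : ℤ) (hq : 0 < q) (hpq : q < p) :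
    ¬ (IsSquare (p ^ 2 + q ^ 2) ∧ IsSquare (p ^ 2 - q ^ 2)) := by
  rintro ⟨⟨r, hr⟩, ⟨s, hs⟩⟩
  have hr0 : r ≠ 0 := by rintro rfl; nlinarith
  have hs0 : s ≠ 0 := by rintro rfl; nlinarith
  refine fourth_pow_sub_fourth_pow_ne_sq (hq.trans hpq) hq (abs_pos.mpr (mul_ne_zero hr0 hs0)) ?_
  rw [sq_abs]
  linear_combination (p ^ 2 - q ^ 2) * hr + r * r * hs
end

section
/- The only triangular number (of a positive integer) that is a fourth power is 1: if x is a positive integer and x(x+1)/2 = y⁴ for some positive integer y, then x = 1. -/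
/-!
Since `x` and `x + 1` are coprime, `x (x + 1) = 2 y⁴` splits into two coprime fourth-power
factors. For even `x = 2k` this gives `2 a⁴ + 1 = b⁴`, i.e. `(a²)⁴ + b⁴ = (a⁴ + 1)²`, which
Fermat's theorem on `a⁴ + b⁴ = c²` rules out. For odd `x = a⁴` it gives `a⁴ + 1 = 2 b⁴`, i.e.
`(b²)⁴ - a⁴ = (b⁴ - 1)²`; by Fermat's right triangle theorem (`x⁴ - y⁴ = z²` has no solution
with `y z ≠ 0`, proved by infinite descent through Pythagorean triples) `b = 1`, so `x = 1`.
-/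

theorem Nat.Coprime.exists_pow_of_mul_eq_pow {a b c n : ℕ} (hab : a.Coprime b)
    (h : a * b = c ^ n) : (∃ d, a = d ^ n) ∧ ∃ e, b = e ^ n :=
  ⟨exists_eq_pow_of_mul_eq_pow (Nat.isUnit_iff.mpr hab) h,
    exists_eq_pow_of_mul_eq_pow (Nat.isUnit_iff.mpr hab.symm) (by rwa [mul_comm])⟩

theorem Nat.exists_of_sq_add_sq_eq_sq {a b c : ℕ} (h : a ^ 2 + b ^ 2 = c ^ 2)
    (hab : a.Coprime b) (ha : Odd a) :
    ∃ m n : ℕ, m.Coprime n ∧ a + n ^ 2 = m ^ 2 ∧ b = 2 * m * n ∧ c = m ^ 2 + n ^ 2 := by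
  have hc : c ≠ 0 := by
    rintro rfl
    simp_all
  have ht : PythagoreanTriple a b c := by
    rw [PythagoreanTriple, ← sq, ← sq, ← sq]
    exact_mod_cast h
  obtain ⟨m, n, ham, hbm, hcm, hmn, -, hm⟩ :=
    ht.coprime_classification' (by rwa [Int.gcd_natCast_natCast])
      (by exact_mod_cast Nat.odd_iff.mp ha) (by positivity)
  refine ⟨m.natAbs, n.natAbs, hmn, ?_, ?_, ?_⟩
  · zify
    rw [sq_abs, abs_of_nonneg hm]
    linarith
  · zify
    rw [abs_of_nonneg hm, ← abs_of_nonneg (Int.natCast_nonneg b), hbm]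
    simp [abs_mul, abs_of_nonneg hm]
  · zify
    simp [hcm]

theorem Nat.exists_of_coprime_mul_eq_two_mul_sq {m n w : ℕ} (hmn : m.Coprime n)
    (h : m * n = 2 * w ^ 2) :
    ∃ a b : ℕ, Nat.Coprime (a ^ 2) (2 * b ^ 2) ∧ w = a * b ∧
      m ^ 2 + n ^ 2 = (a ^ 2) ^ 2 + (2 * b ^ 2) ^ 2 := by
  wlog hm : Even m generalizing m n
  · have hn : Even n := by
      by_contra hn
      simp only [Nat.not_even_iff_odd] at hm hn
      exact Nat.not_even_iff_odd.mpr (hm.mul hn) (h ▸ even_two_mul _)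
    obtain ⟨a, b, hab, hw, hsum⟩ := this hmn.symm (by rwa [mul_comm]) hn
    exact ⟨a, b, hab, hw, by rw [← hsum, add_comm]⟩
  obtain ⟨k, rfl⟩ := hm
  have hk : k * n = w ^ 2 := by linarith
  have hkn : k.Coprime n := hmn.coprime_dvd_left (dvd_add dvd_rfl dvd_rfl)
  obtain ⟨⟨b, rfl⟩, a, rfl⟩ := hkn.exists_pow_of_mul_eq_pow hk
  refine ⟨a, b, by rwa [Nat.Coprime, Nat.gcd_comm, ← two_mul] at hmn, ?_, by ring⟩
  exact Nat.pow_left_injective two_ne_zero (show w ^ 2 = (a * b) ^ 2 by rw [← hk]; ring)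

def Fermat42Sub (x y z : ℕ) : Prop :=
  y ≠ 0 ∧ z ≠ 0 ∧ x ^ 4 = y ^ 4 + z ^ 2

namespace Fermat42Sub

variable {x y z : ℕ}

theorem ne_zero (h : Fermat42Sub x y z) : x ≠ 0 := by
  obtain ⟨hy, -, h⟩ := h
  rintro rfl
  simp [eq_comm (a := 0), hy] at h

theorem exists_lt_of_not_coprime (h : Fermat42Sub x y z) (hxy : ¬x.Coprime y) :
    ∃ x' y' z', x' < x ∧ Fermat42Sub x' y' z' := by
  have hx := h.ne_zero
  obtain ⟨hy, hz, h⟩ := h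
  obtain ⟨p, hp, ⟨x', rfl⟩, ⟨y', rfl⟩⟩ := Nat.Prime.not_coprime_iff_dvd.mp hxy
  have hpz : (p ^ 2) ^ 2 ∣ z ^ 2 := by
    rw [← pow_mul]
    exact (Nat.dvd_add_right (pow_dvd_pow_of_dvd (dvd_mul_right p y') 4)).mp
      (h ▸ pow_dvd_pow_of_dvd (dvd_mul_right p x') 4)
  obtain ⟨z', rfl⟩ := (Nat.pow_dvd_pow_iff two_ne_zero).mp hpz
  refine ⟨x', y', z', lt_mul_left (Nat.pos_of_ne_zero (right_ne_zero_of_mul hx)) hp.one_lt,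
    right_ne_zero_of_mul hy, right_ne_zero_of_mul hz, ?_⟩
  refine mul_left_cancel₀ (pow_ne_zero 4 hp.ne_zero) ?_
  linear_combination h

theorem coprime_sq_left (h : x ^ 4 = y ^ 4 + z ^ 2) (hxy : x.Coprime y) : (y ^ 2).Coprime z := by
  refine Nat.coprime_of_dvd fun p hp hpy hpz ↦ ?_
  have hpy : p ∣ y := hp.dvd_of_dvd_pow hpy
  have hpx : p ∣ x := hp.dvd_of_dvd_pow (n := 4)
    (h ▸ dvd_add (dvd_pow hpy four_ne_zero) (dvd_pow hpz two_ne_zero))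
  exact hp.one_lt.ne' (Nat.eq_one_of_dvd_coprimes hxy hpx hpy)

theorem odd_of_coprime (h : x ^ 4 = y ^ 4 + z ^ 2) (hxy : x.Coprime y) : Odd x := by
  by_contra hx
  obtain ⟨a, rfl⟩ := Nat.not_odd_iff_even.mp hx
  obtain ⟨b, rfl⟩ : Odd y := (Nat.coprime_mul_iff_left.mp (two_mul a ▸ hxy)).1.odd_of_left
  have key : ∀ a b c : ZMod 4, (2 * a) ^ 4 ≠ (2 * b + 1) ^ 4 + c ^ 2 := by decide
  exact key a b z (by exact_mod_cast congrArg (Nat.cast : ℕ → ZMod 4) (two_mul a ▸ h))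

-- `(y², z, x²)` is a primitive Pythagorean triple: `y² = m² - n²` and `x² = m² + n²` multiply to
-- `(x y)² = m⁴ - n⁴`.
theorem exists_lt_of_odd (h : Fermat42Sub x y z) (hxy : x.Coprime y) (hy : Odd y) :
    ∃ x' y' z', x' < x ∧ Fermat42Sub x' y' z' := by
  have hx0 := h.ne_zero
  obtain ⟨hy0, hz0, h⟩ := h
  obtain ⟨m, n, -, hmn, rfl, hx⟩ := Nat.exists_of_sq_add_sq_eq_sq (a := y ^ 2) (b := z)
    (c := x ^ 2) (by linear_combination h.symm) (coprime_sq_left h hxy) hy.pow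
  have hn : n ≠ 0 := right_ne_zero_of_mul hz0
  refine ⟨m, n, x * y, ?_, hn, mul_ne_zero hx0 hy0, ?_⟩
  · refine lt_of_pow_lt_pow_left₀ 2 (Nat.zero_le x) ?_
    rw [hx]
    exact Nat.lt_add_of_pos_right (pow_pos (Nat.pos_of_ne_zero hn) 2)
  · linear_combination (m ^ 2 + n ^ 2) * hmn.symm + y ^ 2 * hx.symm

-- `(z, y², x²)` is a primitive Pythagorean triple: `y² = 2 m n` forces `x² = m² + n² = a⁴ + 4 b⁴`,
-- and the primitive triple `(a², 2 b², x)` then gives `a² = c⁴ - d⁴` with `c² < x`.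
theorem exists_lt_of_even (h : Fermat42Sub x y z) (hxy : x.Coprime y) (hy : Even y) :
    ∃ x' y' z', x' < x ∧ Fermat42Sub x' y' z' := by
  have hx : Odd x := odd_of_coprime h.2.2 hxy
  obtain ⟨hy0, hz0, h⟩ := h
  have hz : Odd z := by
    have hodd : Odd (y ^ 4 + z ^ 2) := h ▸ hx.pow
    exact (Nat.odd_pow_iff two_ne_zero).mp
      ((Nat.odd_add'.mp hodd).mpr (hy.pow_of_ne_zero four_ne_zero))
  obtain ⟨m, n, hmn, -, hymn, hxmn⟩ := Nat.exists_of_sq_add_sq_eq_sq (a := z) (b := y ^ 2)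
    (c := x ^ 2) (by linear_combination h.symm) (coprime_sq_left h hxy).symm hz
  obtain ⟨w, rfl⟩ := hy
  obtain ⟨a, b, hab, rfl, hxab⟩ :=
    Nat.exists_of_coprime_mul_eq_two_mul_sq hmn (w := w) (by linarith)
  have ha : Odd (a ^ 2) := (Nat.coprime_mul_iff_right.mp hab).1.odd_of_right
  obtain ⟨c', d', hcd, hacd, hbcd, rfl⟩ := Nat.exists_of_sq_add_sq_eq_sq (c := x)
    (hxmn.trans hxab).symm hab ha
  obtain ⟨⟨c, rfl⟩, d, rfl⟩ := hcd.exists_pow_of_mul_eq_pow (n := 2) (c := b) (by linarith)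
  have hd : d ≠ 0 := by
    rintro rfl
    apply hy0
    simp_all
  refine ⟨c, d, a, ?_, hd, ?_, by linear_combination hacd.symm⟩
  · calc c ≤ (c ^ 2) ^ 2 := by rw [← pow_mul]; exact Nat.le_self_pow (by norm_num) c
      _ < (c ^ 2) ^ 2 + (d ^ 2) ^ 2 := Nat.lt_add_of_pos_right (by positivity)
  · rintro rfl
    simp at ha

theorem exists_lt (h : Fermat42Sub x y z) : ∃ x' y' z', x' < x ∧ Fermat42Sub x' y' z' := by
  by_cases hxy : x.Coprime y
  · rcases Nat.even_or_odd y with hy | hy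
    · exact h.exists_lt_of_even hxy hy
    · exact h.exists_lt_of_odd hxy hy
  · exact h.exists_lt_of_not_coprime hxy

end Fermat42Sub

theorem not_fermat42Sub {x y z : ℕ} : ¬Fermat42Sub x y z := by
  induction x using Nat.strong_induction_on generalizing y z with
  | _ x ih =>
    intro h
    obtain ⟨x', y', z', hlt, h'⟩ := h.exists_lt
    exact ih x' hlt h'

-- `(a²)⁴ + b⁴ = (a⁴ + 1)²`
theorem two_mul_pow_four_add_one_ne_pow_four {a : ℕ} (ha : a ≠ 0) (b : ℕ) :
    2 * a ^ 4 + 1 ≠ b ^ 4 := by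
  intro h
  have hb : (b : ℤ) ≠ 0 := by
    rintro hb
    simp_all
  have h' : (2 * a ^ 4 + 1 : ℤ) = b ^ 4 := by exact_mod_cast h
  exact not_fermat_42 (a := (a : ℤ) ^ 2) (c := (a : ℤ) ^ 4 + 1) (by positivity) hb
    (by linear_combination h'.symm)

-- `(b²)⁴ = a⁴ + (b⁴ - 1)²`
theorem eq_one_of_pow_four_add_one_eq_two_mul_pow_four {a b : ℕ} (h : a ^ 4 + 1 = 2 * b ^ 4) :
    a = 1 := by
  obtain rfl | hb := eq_or_ne b 1
  · simpa using h
  have hb4 : b ^ 4 ≠ 1 := by simpa [pow_eq_one_iff] using hb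
  refine (not_fermat42Sub (x := b ^ 2) (y := a) (z := b ^ 4 - 1) ⟨?_, by omega, ?_⟩).elim
  · rintro rfl
    omega
  · zify [show 1 ≤ b ^ 4 by omega] at h ⊢
    linear_combination -h

theorem stmt_18_general (x y : ℕ) (hx : 0 < x)
    (h : x * (x + 1) = 2 * y ^ 4) : x = 1 := by
  have hcop : x.Coprime (x + 1) := Nat.coprime_self_add_right.mpr (Nat.coprime_one_right x)
  obtain ⟨k, rfl | rfl⟩ := Nat.even_or_odd' x
  · have hk : k * (2 * k + 1) = y ^ 4 := by linarith
    obtain ⟨⟨a, rfl⟩, b, hb⟩ :=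
      (hcop.coprime_dvd_left (dvd_mul_left k 2)).exists_pow_of_mul_eq_pow hk
    exact absurd hb (two_mul_pow_four_add_one_ne_pow_four (a := a) (by rintro rfl; simp at hx) b)
  · have hk : (2 * k + 1) * (k + 1) = y ^ 4 := by linarith
    obtain ⟨⟨a, ha⟩, b, hb⟩ :=
      (hcop.coprime_dvd_right (⟨2, by ring⟩ : k + 1 ∣ 2 * k + 1 + 1)).exists_pow_of_mul_eq_pow hk
    obtain rfl := eq_one_of_pow_four_add_one_eq_two_mul_pow_four (a := a) (b := b) (by omega)
    simpa using ha

theorem stmt_18 (x y : ℕ) (hx : 0 < x) (hy : 0 < y)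
    (h : x * (x + 1) = 2 * y ^ 4) : x = 1 :=
  stmt_18_general x y hx h
end

section
/- The only positive integer y for which 8y⁴ + 1 is a perfect square is y = 1. -/
/-!
Write `z = 2m + 1`, so that `m (m + 1) = 2 y⁴`. As `m` and `m + 1` are coprime, `y = u v` with
either `u⁴ = 2 v⁴ + 1` or `u⁴ + 1 = 2 v⁴`.

In the first case `u = 2i + 1` and, with `q = i² + i`, `v⁴ = (u⁴ - 1) / 2 = 4q (2q + 1)` is a
product of coprime factors, so `u² - 1 = 4q` is a fourth power `c⁴`. But `c⁴ + 1` is a square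
only for `c = 0`, which gives `v = 0`.

In the second case `u⁴ + (v⁴ - 1)² = (v²)⁴`. Fermat's right triangle theorem, that `x⁴ + w² = z⁴`
has no primitive solution in positive integers, forces `v = 1` and so `y = 1`. It is proved by
infinite descent: parametrising the Pythagorean triple `(x², w, z²)` produces a smaller solution,
directly when `x` is odd, and through the second triple `(s², 2r², z)` with `z² = s⁴ + 4r⁴` when
`x` is even.
-/

theorem Nat.Coprime.exists_eq_pow_of_mul_eq_pow {a b c k : ℕ} (hab : a.Coprime b)
    (h : a * b = c ^ k) : ∃ d e, a = d ^ k ∧ b = e ^ k := by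
  obtain ⟨d, hd⟩ := _root_.exists_eq_pow_of_mul_eq_pow (Nat.isUnit_iff.mpr hab) h
  obtain ⟨e, he⟩ :=
    _root_.exists_eq_pow_of_mul_eq_pow (Nat.isUnit_iff.mpr hab.symm) (mul_comm a b ▸ h)
  exact ⟨d, e, hd, he⟩

theorem Nat.exists_coprime_param_of_sq_add_sq_eq_sq {a b c : ℕ} (h : a ^ 2 + b ^ 2 = c ^ 2)
    (hab : a.Coprime b) (ha : a % 2 = 1) :
    ∃ m n, a + n ^ 2 = m ^ 2 ∧ b = 2 * m * n ∧ c = m ^ 2 + n ^ 2 ∧ m.Coprime n ∧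
      (m % 2 = 0 ∧ n % 2 = 1 ∨ m % 2 = 1 ∧ n % 2 = 0) := by
  have hc : 0 < c := by
    by_contra! hc
    simp_all
  have htriple : PythagoreanTriple (a : ℤ) b c := by
    unfold PythagoreanTriple
    exact_mod_cast (by linear_combination h : _)
  obtain ⟨m, n, ha', hb', hc', hmn, hpar, hm⟩ := htriple.coprime_classification'
    (by rwa [Int.gcd_natCast_natCast]) (by exact_mod_cast ha) (by exact_mod_cast hc)
  lift m to ℕ using hm
  have hn : 0 ≤ n := by
    rcases Nat.eq_zero_or_pos m with rfl | hm0
    · have : (a : ℤ) = 0 := by push_cast at ha'; nlinarith [sq_nonneg n]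
      omega
    · by_contra! hn
      have : (0 : ℤ) < m := by exact_mod_cast hm0
      nlinarith
  lift n to ℕ using hn
  exact ⟨m, n, by zify; linear_combination ha', by exact_mod_cast hb', by exact_mod_cast hc',
    by exact_mod_cast hmn, by omega⟩

theorem Nat.exists_sq_add_sq_eq_pow_four_add_four_mul_pow_four {m n x : ℕ} (hmn : m.Coprime n)
    (hpar : m % 2 = 0 ∧ n % 2 = 1 ∨ m % 2 = 1 ∧ n % 2 = 0) (hx : 0 < x)
    (h : 2 * m * n = x ^ 2) :
    ∃ s r, 0 < r ∧ s % 2 = 1 ∧ s.Coprime r ∧ m ^ 2 + n ^ 2 = s ^ 4 + 4 * r ^ 4 := by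
  wlog hm : m % 2 = 0 generalizing m n
  · obtain ⟨s, r, hr, hs, hsr, hsum⟩ := this hmn.symm (by omega) (by rw [← h]; ring) (by omega)
    exact ⟨s, r, hr, hs, hsr, by rw [← hsum]; ring⟩
  obtain ⟨a, rfl⟩ : ∃ a, m = 2 * a := ⟨m / 2, by omega⟩
  obtain ⟨b, rfl⟩ : ∃ b, x = 2 * b := by
    have : Even (x ^ 2) := ⟨2 * a * n, by rw [← h]; ring⟩
    exact (Nat.even_pow.mp this).1.two_dvd
  obtain ⟨r, s, rfl, rfl⟩ := (hmn.coprime_dvd_left (dvd_mul_left a 2)).exists_eq_pow_of_mul_eq_pow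
    (show a * n = b ^ 2 by linarith)
  refine ⟨s, r, Nat.pos_of_ne_zero ?_, ?_, ?_, by ring⟩
  · rintro rfl
    have : b = 0 := by simpa using h.symm
    omega
  · rcases Nat.mod_two_eq_zero_or_one s with hs | hs
    · simp [Nat.pow_mod, hs] at hpar
    · exact hs
  · have := hmn.coprime_mul_left.symm
    rwa [Nat.coprime_pow_left_iff two_pos, Nat.coprime_pow_right_iff two_pos] at this

def Fermat424 (x w z : ℕ) : Prop :=
  0 < x ∧ 0 < w ∧ x.Coprime z ∧ x ^ 4 + w ^ 2 = z ^ 4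

theorem Nat.Coprime.coprime_of_pow_four_add_sq_eq {x w z : ℕ} (hxz : x.Coprime z)
    (h : x ^ 4 + w ^ 2 = z ^ 4) : x.Coprime w := by
  have : (x ^ 4).Coprime (w ^ 2 + x ^ 4) := by
    rw [add_comm, h]
    exact hxz.pow 4 4
  exact ((Nat.coprime_pow_left_iff four_pos _ _).mp
    (Nat.coprime_add_self_right.mp this)).coprime_dvd_right (dvd_pow_self w two_ne_zero)

namespace Fermat424

variable {x w z : ℕ}

theorem exists_lt_of_odd (h : Fermat424 x w z) (hx : x % 2 = 1) :
    ∃ x' w' z', z' < z ∧ Fermat424 x' w' z' := by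
  obtain ⟨hx0, hw0, hxz, heq⟩ := h
  obtain ⟨m, n, hm, hw, hz, hmn, -⟩ := Nat.exists_coprime_param_of_sq_add_sq_eq_sq
    (a := x ^ 2) (b := w) (c := z ^ 2) (by rw [← pow_mul, ← pow_mul]; exact heq)
    ((hxz.coprime_of_pow_four_add_sq_eq heq).pow_left 2) (by rw [Nat.pow_mod, hx])
  have hn0 : 0 < n := Nat.pos_of_ne_zero (by rintro rfl; simp at hw; omega)
  have hmz : m < z := lt_of_pow_lt_pow_left₀ 2 (Nat.zero_le z) (by
    rw [hz]
    have := pow_pos hn0 2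
    omega)
  refine ⟨n, x * z, m, hmz, hn0, Nat.mul_pos hx0 (by omega), hmn.symm, ?_⟩
  rw [show m ^ 4 = (m ^ 2) ^ 2 by ring, mul_pow, hz, ← hm]
  ring

theorem exists_of_sq_eq_pow_four_add_four_mul_pow_four {s r : ℕ} (hs : s % 2 = 1) (hr : 0 < r)
    (hsr : s.Coprime r) (h : z ^ 2 = s ^ 4 + 4 * r ^ 4) :
    ∃ x g, g < z ∧ Fermat424 x s g := by
  have hs2 : s ^ 2 % 2 = 1 := by rw [Nat.pow_mod, hs]
  obtain ⟨e, f, hs', hr', hz, hef, -⟩ := Nat.exists_coprime_param_of_sq_add_sq_eq_sq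
    (a := s ^ 2) (b := 2 * r ^ 2) (c := z) (by rw [h]; ring)
    ((Nat.coprime_two_right.mpr (Nat.odd_iff.mpr hs2)).mul_right (hsr.pow 2 2)) hs2
  obtain ⟨g, x, rfl, rfl⟩ := hef.exists_eq_pow_of_mul_eq_pow (show e * f = r ^ 2 by linarith)
  have hx : 0 < x := Nat.pos_of_ne_zero (by rintro rfl; simp at hr'; omega)
  have hgz : g < z := by
    have : 0 < (x ^ 2) ^ 2 := by positivity
    have : g ≤ (g ^ 2) ^ 2 :=
      (Nat.le_self_pow two_ne_zero g).trans (Nat.le_self_pow two_ne_zero _)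
    omega
  rw [Nat.coprime_pow_left_iff two_pos, Nat.coprime_pow_right_iff two_pos] at hef
  exact ⟨x, g, hgz, hx, by omega, hef.symm, by linear_combination hs'⟩

theorem exists_lt_of_even (h : Fermat424 x w z) (hx : x % 2 = 0) :
    ∃ x' w' z', z' < z ∧ Fermat424 x' w' z' := by
  obtain ⟨hx0, -, hxz, heq⟩ := h
  have hxw := hxz.coprime_of_pow_four_add_sq_eq heq
  have hw : w % 2 = 1 := Nat.odd_iff.mp
    (Nat.coprime_two_left.mp (hxw.coprime_dvd_left (Nat.dvd_of_mod_eq_zero hx)))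
  obtain ⟨m, n, -, hx2, hz, hmn, hpar⟩ := Nat.exists_coprime_param_of_sq_add_sq_eq_sq
    (a := w) (b := x ^ 2) (c := z ^ 2) (by rw [← pow_mul, ← pow_mul, ← heq]; ring)
    (hxw.symm.pow_right 2) hw
  obtain ⟨s, r, hr, hs, hsr, hsum⟩ :=
    Nat.exists_sq_add_sq_eq_pow_four_add_four_mul_pow_four hmn hpar hx0 hx2.symm
  obtain ⟨x', g, hgz, hsol⟩ :=
    exists_of_sq_eq_pow_four_add_four_mul_pow_four hs hr hsr (hz.trans hsum)
  exact ⟨x', s, g, hgz, hsol⟩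

theorem exists_lt (h : Fermat424 x w z) : ∃ x' w' z', z' < z ∧ Fermat424 x' w' z' :=
  (Nat.mod_two_eq_zero_or_one x).elim h.exists_lt_of_even h.exists_lt_of_odd

end Fermat424

theorem not_fermat424 {x w z : ℕ} : ¬Fermat424 x w z := by
  induction z using Nat.strong_induction_on generalizing x w with
  | _ z ih =>
    intro h
    obtain ⟨x', w', z', hz', h'⟩ := h.exists_lt
    exact ih z' hz' h'

theorem Nat.eq_one_of_pow_four_add_one_eq_two_mul_pow_four {u v : ℕ}
    (h : u ^ 4 + 1 = 2 * v ^ 4) : v = 1 := by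
  by_contra hv
  obtain ⟨w, hw⟩ : ∃ w, v ^ 4 = w + 1 := ⟨v ^ 4 - 1, by omega⟩
  have hw0 : 0 < w := Nat.pos_of_ne_zero (by rintro rfl; simp_all)
  have huv : u.Coprime (v ^ 2) := by
    have : (u ^ 4).Coprime (u ^ 4 + 1) :=
      Nat.coprime_self_add_right.mpr (Nat.coprime_one_right _)
    rw [h] at this
    have := this.coprime_mul_left_right
    rwa [show v ^ 4 = (v ^ 2) ^ 2 by ring, Nat.coprime_pow_left_iff four_pos,
      Nat.coprime_pow_right_iff two_pos] at this
  refine not_fermat424 ⟨Nat.pos_of_ne_zero (by rintro rfl; omega), hw0, huv, ?_⟩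
  rw [show (v ^ 2) ^ 4 = (v ^ 4) ^ 2 by ring, hw]
  linear_combination h + 2 * hw

theorem Nat.eq_zero_of_pow_four_eq_two_mul_pow_four_add_one {u v : ℕ}
    (h : u ^ 4 = 2 * v ^ 4 + 1) : v = 0 := by
  obtain ⟨i, rfl⟩ : ∃ i, u = 2 * i + 1 := ⟨u / 2, by
    rcases Nat.mod_two_eq_zero_or_one u with hu | hu
    · have : u ^ 4 % 2 = 0 := by rw [Nat.pow_mod, hu]
      omega
    · omega⟩
  set q := i ^ 2 + i with hq
  have hu2 : (2 * i + 1) ^ 2 = 4 * q + 1 := by rw [hq]; ring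
  have hqv : 4 * q * (2 * q + 1) = v ^ 4 := by
    rw [show (2 * i + 1) ^ 4 = ((2 * i + 1) ^ 2) ^ 2 by ring, hu2] at h
    linarith
  have hcop : (4 * q).Coprime (2 * q + 1) := by
    rw [Nat.coprime_mul_iff_left]
    exact ⟨(Nat.coprime_two_left.mpr (by simp)).pow_left 2, by simp⟩
  obtain ⟨c, -, hc, -⟩ := hcop.exists_eq_pow_of_mul_eq_pow hqv
  rcases Nat.eq_zero_or_pos c with rfl | hc0
  · simp_all
  · refine (Nat.not_exists_sq' (m := c ^ 2) (n := c ^ 4 + 1) ?_ ?_ ⟨2 * i + 1, by omega⟩).elim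
    · rw [← pow_mul]
      exact Nat.lt_succ_self _
    · have : 0 < c ^ 2 := by positivity
      have : (c ^ 2 + 1) ^ 2 = c ^ 4 + 2 * c ^ 2 + 1 := by ring
      omega

theorem Nat.exists_of_mul_succ_eq_two_mul_pow_four {m y : ℕ} (h : m * (m + 1) = 2 * y ^ 4) :
    ∃ u v, y = u * v ∧ (u ^ 4 = 2 * v ^ 4 + 1 ∨ u ^ 4 + 1 = 2 * v ^ 4) := by
  have hy : ∀ u v, u ^ 4 * v ^ 4 = y ^ 4 → y = u * v := fun u v huv =>
    Nat.pow_left_injective four_ne_zero (show y ^ 4 = (u * v) ^ 4 by rw [mul_pow, huv])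
  rcases Nat.even_or_odd' m with ⟨a, rfl | rfl⟩
  · have hprod : a * (2 * a + 1) = y ^ 4 := by linarith
    obtain ⟨v, u, hv, hu⟩ :=
      (show a.Coprime (2 * a + 1) by simp).exists_eq_pow_of_mul_eq_pow hprod
    exact ⟨u, v, hy u v (by rw [← hu, ← hv, mul_comm, hprod]), .inl (by omega)⟩
  · have hprod : (2 * a + 1) * (a + 1) = y ^ 4 := by linarith
    have hcop : (2 * a + 1).Coprime (a + 1) := by
      rw [show 2 * a + 1 = a + (a + 1) by ring, Nat.coprime_add_self_left]
      simp
    obtain ⟨u, v, hu, hv⟩ := hcop.exists_eq_pow_of_mul_eq_pow hprod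
    exact ⟨u, v, hy u v (by rw [← hu, ← hv, hprod]), .inr (by omega)⟩

theorem stmt_19_general (y z : ℕ) (hy : 0 < y)
    (h : 8 * y ^ 4 + 1 = z ^ 2) : y = 1 := by
  obtain ⟨m, rfl⟩ : Odd z := (Nat.odd_pow_iff two_ne_zero).mp ⟨4 * y ^ 4, by omega⟩
  obtain ⟨u, v, rfl, huv | huv⟩ :=
    Nat.exists_of_mul_succ_eq_two_mul_pow_four (m := m) (y := y) (by linarith)
  · simp [Nat.eq_zero_of_pow_four_eq_two_mul_pow_four_add_one huv] at hy
  · obtain rfl := Nat.eq_one_of_pow_four_add_one_eq_two_mul_pow_four huv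
    simpa using huv

theorem stmt_19 (y z : ℕ) (hy : 0 < y) (hz : 0 < z)
    (h : 8 * y ^ 4 + 1 = z ^ 2) : y = 1 :=
  stmt_19_general y z hy h
end
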